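/- Let H be a Hilbert space and (u^γ)_{γ>0} a family with ‖u^γ‖ ≤ C uniformly in γ, minimizing strictly convex coercive quadratic functionals J^γ(v) = F(v) + (1/γ)‖Kv‖² where F is a fixed continuous strictly convex quadratic functional and K is bounded linear. Then along a sequence γ_n → 0, u^{γ_n} converges weakly to some u with Ku = 0, and u minimizes F over the closed subspace ker K. -/
import Mathlib

set_option maxHeartbeats 1000000


open RealInnerProductSpace Filter

private lemma half_parallelogram {E : Type*} [NormedAddCommGroup E] [InnerProductSpace ℝ E]
    (a b : E) :
    ‖(2:ℝ)⁻¹ • (a + b)‖ ^ 2 + ‖(2:ℝ)⁻¹ • (a - b)‖ ^ 2 = (‖a‖ ^ 2 + ‖b‖ ^ 2) / 2 := by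
  have h := parallelogram_law_with_norm ℝ a b
  rw [norm_smul, norm_smul]
  have h2 : ‖(2:ℝ)⁻¹‖ = (2:ℝ)⁻¹ := by norm_num
  rw [h2]
  nlinarith [norm_nonneg (a+b), norm_nonneg (a-b)]

/-- Proposition 4.9, abstract form: let `u γ` minimize the strictly convex
coercive quadratic functionals `J^γ(v) = F(v) + (1/γ)‖Kv‖²`,
`F(v) = ‖Lv + c‖² + ℵ‖v‖²`, with a bound `‖u γ‖ ≤ C` uniform in `γ`. Then along a
sequence `γ_n → 0` the minimizers converge weakly to some `u` with `Ku = 0`, and `u`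
minimizes `F` over the closed subspace `ker K`. -/
theorem low_regret_converges_to_no_regret {H H' H'' : Type*}
    [NormedAddCommGroup H] [InnerProductSpace ℝ H] [CompleteSpace H]
    [NormedAddCommGroup H'] [InnerProductSpace ℝ H']
    [NormedAddCommGroup H''] [InnerProductSpace ℝ H'']
    (L : H →L[ℝ] H') (K : H →L[ℝ] H'') (c : H') (al : ℝ) (hal : 0 < al)
    (F : H → ℝ) (hF : ∀ v, F v = ‖L v + c‖ ^ 2 + al * ‖v‖ ^ 2)
    (u : ℝ → H) (C : ℝ) (hbound : ∀ γ : ℝ, 0 < γ → ‖u γ‖ ≤ C)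
    (hmin : ∀ γ : ℝ, 0 < γ → ∀ v : H,
      F (u γ) + (1 / γ) * ‖K (u γ)‖ ^ 2 ≤ F v + (1 / γ) * ‖K v‖ ^ 2) :
    ∃ (γn : ℕ → ℝ) (ul : H),
      (∀ n, 0 < γn n) ∧ Tendsto γn atTop (nhds 0) ∧
      (∀ w : H, Tendsto (fun n => ⟪u (γn n), w⟫) atTop (nhds ⟪ul, w⟫)) ∧
      K ul = 0 ∧
      ∀ v : H, K v = 0 → F ul ≤ F v := by
  classical
  obtain ⟨s, hs⟩ : ∃ s : ℝ → ℝ, ∀ γ, s γ = F (u γ) + (1 / γ) * ‖K (u γ)‖ ^ 2 :=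
    ⟨_, fun _ => rfl⟩
  obtain ⟨F0, hF0def⟩ : ∃ F0 : ℝ, F0 = ‖c‖ ^ 2 := ⟨_, rfl⟩
  have hF0nn : (0:ℝ) ≤ F0 := by rw [hF0def]; positivity
  have hF0eq : F 0 = F0 := by simp [hF, hF0def]
  have hFnn : ∀ v, 0 ≤ F v := fun v => by rw [hF]; positivity
  -- Lemma A: s γ ≤ F v for any v in ker K
  have hA : ∀ γ : ℝ, 0 < γ → ∀ v, K v = 0 → s γ ≤ F v := by
    intro γ hγ v hv
    have h := hmin γ hγ v
    rw [hs]
    simpa [hv] using h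
  have hsF0 : ∀ γ : ℝ, 0 < γ → s γ ≤ F0 := by
    intro γ hγ
    have := hA γ hγ 0 (map_zero K)
    rwa [hF0eq] at this
  have hFles : ∀ γ : ℝ, 0 < γ → F (u γ) ≤ s γ := by
    intro γ hγ
    have h1 : 0 ≤ (1 / γ) * ‖K (u γ)‖ ^ 2 := by positivity
    rw [hs]; linarith
  -- K-term bound: ‖K (u γ)‖² ≤ γ * F0
  have hK2 : ∀ γ : ℝ, 0 < γ → ‖K (u γ)‖ ^ 2 ≤ γ * F0 := by
    intro γ hγ
    have h1 := hsF0 γ hγ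
    rw [hs] at h1
    have h2 := hFnn (u γ)
    have h3 : (1 / γ) * ‖K (u γ)‖ ^ 2 ≤ F0 := by linarith
    have h4 : γ * ((1 / γ) * ‖K (u γ)‖ ^ 2) ≤ γ * F0 :=
      mul_le_mul_of_nonneg_left h3 hγ.le
    calc ‖K (u γ)‖ ^ 2 = γ * ((1 / γ) * ‖K (u γ)‖ ^ 2) := by field_simp
      _ ≤ γ * F0 := h4
  -- monotonicity of s
  have hmono : ∀ γ γ' : ℝ, 0 < γ' → γ' ≤ γ → s γ ≤ s γ' := by
    intro γ γ' hγ' hle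
    have hγ : 0 < γ := lt_of_lt_of_le hγ' hle
    have h1 := hmin γ hγ (u γ')
    have h2 : (1 / γ) * ‖K (u γ')‖ ^ 2 ≤ (1 / γ') * ‖K (u γ')‖ ^ 2 :=
      mul_le_mul_of_nonneg_right (one_div_le_one_div_of_le hγ' hle) (by positivity)
    rw [hs, hs]
    linarith
  -- key strong convexity inequality
  have hkey : ∀ γ γ' : ℝ, 0 < γ' → γ' ≤ γ →
      al / 2 * ‖u γ - u γ'‖ ^ 2 ≤ s γ' - s γ + (γ' / γ) * F0 := by
    intro γ γ' hγ' hle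
    have hγ : 0 < γ := lt_of_lt_of_le hγ' hle
    have hLm : L ((2:ℝ)⁻¹ • (u γ + u γ')) + c
        = (2:ℝ)⁻¹ • ((L (u γ) + c) + (L (u γ') + c)) := by
      rw [map_smul, map_add]; module
    have hLd : L ((2:ℝ)⁻¹ • (u γ - u γ'))
        = (2:ℝ)⁻¹ • ((L (u γ) + c) - (L (u γ') + c)) := by
      rw [map_smul, map_sub]; module
    have hKm : K ((2:ℝ)⁻¹ • (u γ + u γ')) = (2:ℝ)⁻¹ • (K (u γ) + K (u γ')) := by
      rw [map_smul, map_add]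
    have hKd : K ((2:ℝ)⁻¹ • (u γ - u γ')) = (2:ℝ)⁻¹ • (K (u γ) - K (u γ')) := by
      rw [map_smul, map_sub]
    have e1 : ‖L ((2:ℝ)⁻¹ • (u γ + u γ')) + c‖ ^ 2 + ‖L ((2:ℝ)⁻¹ • (u γ - u γ'))‖ ^ 2
        = (‖L (u γ) + c‖ ^ 2 + ‖L (u γ') + c‖ ^ 2) / 2 := by
      rw [hLm, hLd]; exact half_parallelogram _ _
    have e2 : ‖K ((2:ℝ)⁻¹ • (u γ + u γ'))‖ ^ 2 + ‖K ((2:ℝ)⁻¹ • (u γ - u γ'))‖ ^ 2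
        = (‖K (u γ)‖ ^ 2 + ‖K (u γ')‖ ^ 2) / 2 := by
      rw [hKm, hKd]; exact half_parallelogram _ _
    have e3 : ‖(2:ℝ)⁻¹ • (u γ + u γ')‖ ^ 2 + ‖(2:ℝ)⁻¹ • (u γ - u γ')‖ ^ 2
        = (‖u γ‖ ^ 2 + ‖u γ'‖ ^ 2) / 2 := half_parallelogram _ _
    have hmid := hmin γ hγ ((2:ℝ)⁻¹ • (u γ + u γ'))
    rw [hF ((2:ℝ)⁻¹ • (u γ + u γ')), hF (u γ)] at hmid
    have hsγ : s γ = ‖L (u γ) + c‖ ^ 2 + al * ‖u γ‖ ^ 2 + 1/γ * ‖K (u γ)‖ ^ 2 := by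
      rw [hs, hF]
    have hsγ' : s γ' = ‖L (u γ') + c‖ ^ 2 + al * ‖u γ'‖ ^ 2 + 1/γ' * ‖K (u γ')‖ ^ 2 := by
      rw [hs, hF]
    have hdn : ‖(2:ℝ)⁻¹ • (u γ - u γ')‖ ^ 2 = ‖u γ - u γ'‖ ^ 2 / 4 := by
      rw [norm_smul]
      have h2 : ‖(2:ℝ)⁻¹‖ = (2:ℝ)⁻¹ := by norm_num
      rw [h2]; ring
    have hKy2 : ‖K (u γ')‖ ^ 2 ≤ γ' * F0 := hK2 γ' hγ'
    have htrade : 1/γ * ‖K (u γ')‖ ^ 2 ≤ (γ' / γ) * F0 := by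
      have h1 : 1/γ * ‖K (u γ')‖ ^ 2 ≤ 1/γ * (γ' * F0) :=
        mul_le_mul_of_nonneg_left hKy2 (by positivity)
      calc 1/γ * ‖K (u γ')‖ ^ 2 ≤ 1/γ * (γ' * F0) := h1
        _ = (γ' / γ) * F0 := by ring
    have hLd2 : (0:ℝ) ≤ ‖L ((2:ℝ)⁻¹ • (u γ - u γ'))‖ ^ 2 := by positivity
    have hKd2 : (0:ℝ) ≤ 1/γ * ‖K ((2:ℝ)⁻¹ • (u γ - u γ'))‖ ^ 2 := by positivity
    have e2' : 1/γ * ‖K ((2:ℝ)⁻¹ • (u γ + u γ'))‖ ^ 2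
          + 1/γ * ‖K ((2:ℝ)⁻¹ • (u γ - u γ'))‖ ^ 2
        = 1/γ * ‖K (u γ)‖ ^ 2 / 2 + 1/γ * ‖K (u γ')‖ ^ 2 / 2 := by
      calc 1/γ * ‖K ((2:ℝ)⁻¹ • (u γ + u γ'))‖ ^ 2
            + 1/γ * ‖K ((2:ℝ)⁻¹ • (u γ - u γ'))‖ ^ 2
          = 1/γ * (‖K ((2:ℝ)⁻¹ • (u γ + u γ'))‖ ^ 2
            + ‖K ((2:ℝ)⁻¹ • (u γ - u γ'))‖ ^ 2) := by ring
        _ = 1/γ * ((‖K (u γ)‖ ^ 2 + ‖K (u γ')‖ ^ 2) / 2) := by rw [e2]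
        _ = 1/γ * ‖K (u γ)‖ ^ 2 / 2 + 1/γ * ‖K (u γ')‖ ^ 2 / 2 := by ring
    have e3' : al * ‖(2:ℝ)⁻¹ • (u γ + u γ')‖ ^ 2 + al * ‖(2:ℝ)⁻¹ • (u γ - u γ')‖ ^ 2
        = al * ‖u γ‖ ^ 2 / 2 + al * ‖u γ'‖ ^ 2 / 2 := by
      calc al * ‖(2:ℝ)⁻¹ • (u γ + u γ')‖ ^ 2 + al * ‖(2:ℝ)⁻¹ • (u γ - u γ')‖ ^ 2
          = al * (‖(2:ℝ)⁻¹ • (u γ + u γ')‖ ^ 2 + ‖(2:ℝ)⁻¹ • (u γ - u γ')‖ ^ 2) := by ring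
        _ = al * ((‖u γ‖ ^ 2 + ‖u γ'‖ ^ 2) / 2) := by rw [e3]
        _ = al * ‖u γ‖ ^ 2 / 2 + al * ‖u γ'‖ ^ 2 / 2 := by ring
    have hcomb : 2 * (al * ‖(2:ℝ)⁻¹ • (u γ - u γ')‖ ^ 2)
        ≤ (‖L (u γ') + c‖ ^ 2 + al * ‖u γ'‖ ^ 2) + 1/γ * ‖K (u γ')‖ ^ 2 - s γ := by
      linarith [hmid, e1, e2', e3', hsγ, hLd2, hKd2]
    have hhalf : al / 2 * ‖u γ - u γ'‖ ^ 2
        = 2 * (al * ‖(2:ℝ)⁻¹ • (u γ - u γ')‖ ^ 2) := by rw [hdn]; ring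
    rw [hhalf]
    have hFyle : ‖L (u γ') + c‖ ^ 2 + al * ‖u γ'‖ ^ 2 ≤ s γ' := by
      have h1 : 0 ≤ 1/γ' * ‖K (u γ')‖ ^ 2 := by positivity
      linarith [hsγ']
    linarith
  -- sup of s on (0,1]
  have hne : (s '' Set.Ioc 0 1).Nonempty := ⟨s 1, ⟨1, by norm_num, rfl⟩⟩
  have hbdd : BddAbove (s '' Set.Ioc 0 1) := by
    refine ⟨F0, ?_⟩
    rintro _ ⟨γ, hγ, rfl⟩
    exact hsF0 γ hγ.1
  obtain ⟨M, hM⟩ : ∃ M : ℝ, M = sSup (s '' Set.Ioc 0 1) := ⟨_, rfl⟩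
  have hMge : ∀ γ : ℝ, 0 < γ → γ ≤ 1 → s γ ≤ M := fun γ h1 h2 => by
    rw [hM]; exact le_csSup hbdd ⟨γ, ⟨h1, h2⟩, rfl⟩
  have happrox : ∀ n : ℕ, ∃ γ : ℝ, (0 < γ ∧ γ ≤ 1) ∧ M - (1/2)^n < s γ := by
    intro n
    have hp : (0:ℝ) < (1/2)^n := by positivity
    obtain ⟨w, hw, hlt⟩ := exists_lt_of_lt_csSup hne
      (show M - (1/2)^n < sSup (s '' Set.Ioc 0 1) by rw [← hM]; linarith)
    obtain ⟨γ, hγ, rfl⟩ := hw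
    exact ⟨γ, ⟨hγ.1, hγ.2⟩, hlt⟩
  choose t ht1 ht2 using happrox
  -- recursive sequence
  obtain ⟨γseq, hγ0, hγsucc⟩ : ∃ g : ℕ → ℝ, g 0 = t 0 ∧ ∀ n, g (n+1) =
      min (t (n+1)) (min (g n * ((1/2)^n / (F0+1))) ((1/2)^(n+1))) :=
    ⟨fun n => Nat.rec (t 0)
      (fun n prev => min (t (n+1)) (min (prev * ((1/2)^n / (F0+1))) ((1/2)^(n+1)))) n,
      rfl, fun n => rfl⟩
  have hpos : ∀ n, 0 < γseq n := by
    intro n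
    induction n with
    | zero => rw [hγ0]; exact (ht1 0).1
    | succ n ih =>
      rw [hγsucc]
      refine lt_min (ht1 (n+1)).1 (lt_min ?_ (by positivity))
      have h1 : (0:ℝ) < (1/2)^n := by positivity
      have h2 : (0:ℝ) < F0 + 1 := by linarith
      positivity
  have hle_t : ∀ n, γseq n ≤ t n := by
    intro n
    cases n with
    | zero => rw [hγ0]
    | succ n => rw [hγsucc]; exact min_le_left _ _
  have hle_pow : ∀ n, γseq n ≤ (1/2)^n := by
    intro n
    cases n with
    | zero =>
      rw [hγ0]
      have := (ht1 0).2
      norm_num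
      linarith
    | succ n =>
      rw [hγsucc]
      exact le_trans (min_le_right _ _) (min_le_right _ _)
  have hratio : ∀ n, γseq (n+1) ≤ γseq n * ((1/2)^n / (F0+1)) := by
    intro n
    rw [hγsucc]
    exact le_trans (min_le_right _ _) (min_le_left _ _)
  have hfac : ∀ n : ℕ, ((1:ℝ)/2)^n / (F0+1) ≤ 1 := by
    intro n
    rw [div_le_one (by linarith)]
    calc ((1:ℝ)/2)^n ≤ 1 := by
          apply pow_le_one₀ <;> norm_num
      _ ≤ F0 + 1 := by linarith
  have hanti : ∀ n, γseq (n+1) ≤ γseq n := by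
    intro n
    calc γseq (n+1) ≤ γseq n * ((1/2)^n / (F0+1)) := hratio n
      _ ≤ γseq n * 1 := mul_le_mul_of_nonneg_left (hfac n) (hpos n).le
      _ = γseq n := mul_one _
  have hanti' : Antitone γseq := antitone_nat_of_succ_le hanti
  have hchain : ∀ n m, n < m → γseq m ≤ γseq n * ((1/2)^n / (F0+1)) := by
    intro n m hnm
    calc γseq m ≤ γseq (n+1) := hanti' hnm
      _ ≤ γseq n * ((1/2)^n / (F0+1)) := hratio n
  have hs_lb : ∀ n, M - (1/2)^n ≤ s (γseq n) := by
    intro n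
    have h1 : s (t n) ≤ s (γseq n) := hmono (t n) (γseq n) (hpos n) (hle_t n)
    have h2 := ht2 n
    linarith
  have hle_one : ∀ n, γseq n ≤ 1 := by
    intro n
    calc γseq n ≤ (1/2)^n := hle_pow n
      _ ≤ 1 := by apply pow_le_one₀ <;> norm_num
  -- pair bound
  have hpair : ∀ n m, n ≤ m → ‖u (γseq n) - u (γseq m)‖ ^ 2 ≤ 4 * (1/2)^n / al := by
    intro n m hnm
    rcases eq_or_lt_of_le hnm with rfl | h
    · have h0 : (0:ℝ) ≤ 4 * (1/2)^n / al := by positivity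
      simpa [sub_self] using h0
    · have hk := hkey (γseq n) (γseq m) (hpos m) (hanti' h.le)
      have h1 : s (γseq m) ≤ M := hMge _ (hpos m) (hle_one m)
      have h2 := hs_lb n
      have h3 : (γseq m / γseq n) * F0 ≤ (1/2)^n := by
        have hc := hchain n m h
        have hn := hpos n
        have hdiv : γseq m / γseq n ≤ (1/2)^n / (F0+1) := by
          rw [div_le_iff₀ hn]
          calc γseq m ≤ γseq n * ((1/2)^n / (F0+1)) := hc
            _ = (1/2)^n / (F0+1) * γseq n := by ring
        calc (γseq m / γseq n) * F0 ≤ ((1/2)^n / (F0+1)) * F0 :=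
              mul_le_mul_of_nonneg_right hdiv hF0nn
          _ ≤ (1/2)^n := by
              rw [div_mul_eq_mul_div, div_le_iff₀ (by linarith : (0:ℝ) < F0+1)]
              have hp : (0:ℝ) ≤ (1/2)^n := by positivity
              nlinarith
      have h4 : al / 2 * ‖u (γseq n) - u (γseq m)‖ ^ 2 ≤ 2 * (1/2)^n := by linarith
      rw [le_div_iff₀ hal]
      linarith
  -- Cauchy
  have hcauchy : CauchySeq (fun n => u (γseq n)) := by
    rw [Metric.cauchySeq_iff']
    intro ε hε
    have htp : Tendsto (fun n : ℕ => 4 * ((1:ℝ)/2)^n / al) atTop (nhds 0) := by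
      have h0 : Tendsto (fun n : ℕ => ((1:ℝ)/2)^n) atTop (nhds 0) :=
        tendsto_pow_atTop_nhds_zero_of_lt_one (by norm_num) (by norm_num)
      have h1 := (h0.const_mul (4:ℝ)).div_const al
      simpa using h1
    have hev := (htp.eventually (gt_mem_nhds (show (0:ℝ) < ε^2 by positivity))).exists
    obtain ⟨N, hN⟩ := hev
    refine ⟨N, fun n hn => ?_⟩
    have hp := hpair N n hn
    rw [dist_eq_norm, ← norm_sub_rev]
    have hnn : (0:ℝ) ≤ ‖u (γseq N) - u (γseq n)‖ := norm_nonneg _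
    nlinarith [hp, hN, hnn, hε, sq_nonneg (‖u (γseq N) - u (γseq n)‖ - ε)]
  obtain ⟨ul, hul⟩ := cauchySeq_tendsto_of_complete hcauchy
  -- γseq → 0
  have htend0 : Tendsto γseq atTop (nhds 0) := by
    have h0 : Tendsto (fun n : ℕ => ((1:ℝ)/2)^n) atTop (nhds 0) :=
      tendsto_pow_atTop_nhds_zero_of_lt_one (by norm_num) (by norm_num)
    exact squeeze_zero (fun n => (hpos n).le) hle_pow h0
  -- K ul = 0
  have hKsq : Tendsto (fun n => ‖K (u (γseq n))‖ ^ 2) atTop (nhds 0) := by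
    have hub : ∀ n, ‖K (u (γseq n))‖ ^ 2 ≤ γseq n * F0 := fun n => hK2 _ (hpos n)
    have hmul : Tendsto (fun n => γseq n * F0) atTop (nhds 0) := by
      have h1 := htend0.mul_const F0
      rwa [zero_mul] at h1
    exact squeeze_zero (fun n => by positivity) hub hmul
  have hKnorm : Tendsto (fun n => ‖K (u (γseq n))‖) atTop (nhds 0) := by
    have hcomp : Tendsto (fun n => Real.sqrt (‖K (u (γseq n))‖ ^ 2)) atTop
        (nhds (Real.sqrt 0)) := (Real.continuous_sqrt.tendsto 0).comp hKsq
    rw [Real.sqrt_zero] at hcomp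
    exact hcomp.congr fun n => Real.sqrt_sq (norm_nonneg _)
  have hKz : Tendsto (fun n => K (u (γseq n))) atTop (nhds 0) :=
    tendsto_zero_iff_norm_tendsto_zero.mpr hKnorm
  have hKul : Tendsto (fun n => K (u (γseq n))) atTop (nhds (K ul)) :=
    (K.continuous.tendsto ul).comp hul
  have hKeq : K ul = 0 := tendsto_nhds_unique hKul hKz
  -- F continuity
  have hFcont : Continuous F := by
    have hFe : F = fun v => ‖L v + c‖ ^ 2 + al * ‖v‖ ^ 2 := funext hF
    rw [hFe]; fun_prop
  refine ⟨γseq, ul, hpos, htend0, ?_, hKeq, ?_⟩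
  · intro w
    exact hul.inner tendsto_const_nhds
  · intro v hv
    have hFt : Tendsto (fun n => F (u (γseq n))) atTop (nhds (F ul)) :=
      (hFcont.tendsto ul).comp hul
    refine le_of_tendsto hFt (Eventually.of_forall fun n => ?_)
    calc F (u (γseq n)) ≤ s (γseq n) := hFles _ (hpos n)
      _ ≤ F v := hA _ (hpos n) v hv
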